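/- arXiv:1902.06982 — 3 statements merged into one kernel-verified Lean document; each statement's English description precedes it below -/
import Mathlib

section
/- Let h : ℝ² × (ℝ² \ {0}) → ℝ be defined by h(z,ξ) = √(‖ξ‖² + ⟨z,ξ⟩²) (the Hamiltonian of the hyperbolic metric g = (1/(1+u²+v²))[(1+v²)du² − 2uv du dv + (1+u²)dv²] on ℝ², whose inverse metric is g⁻¹(z) = I₂ + z zᵀ). Then for every η ∈ ℝ² with η ≠ 0, the curves z*(t) = sinh(t) η/‖η‖ and ξ*(t) = η/cosh(t), defined for all t ∈ ℝ, satisfy Hamilton's equations ż*(t) = ∂h/∂ξ(z*(t), ξ*(t)) and ξ̇*(t) = −∂h/∂z(z*(t), ξ*(t)), with initial conditions z*(0) = 0 and ξ*(0) = η. -/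
/-!
With `Q(z, ξ) = ‖ξ‖² + ⟪z, ξ⟫²` and `h = √Q`, the partial gradients are
`∇_ξ h = (ξ + ⟪z, ξ⟫ z) / h` and `∇_z h = ⟪z, ξ⟫ ξ / h`. Along the geodesic `(z*, ξ*)`,
`⟪z*, ξ*⟫ = tanh t ‖η‖` and, since `cosh² = 1 + sinh²`, the energy `h(z*, ξ*) = ‖η‖` is
conserved; substituting these values, both gradients become scalar multiples of `η`
(`cosh t / ‖η‖` and `sinh t / cosh² t`), which are the derivatives of `sinh t / ‖η‖`
and `−(cosh t)⁻¹`.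
-/

open Real InnerProductSpace

section Gradient

variable {E : Type*} [NormedAddCommGroup E] [InnerProductSpace ℝ E] [CompleteSpace E]

theorem HasGradientAt.sqrt {f : E → ℝ} {g x : E} (hf : HasGradientAt f g x) (hx : f x ≠ 0) :
    HasGradientAt (fun y => √(f y)) ((2 * √(f x))⁻¹ • g) x := by
  rw [hasGradientAt_iff_hasFDerivAt] at hf ⊢
  simpa [map_smul] using hf.sqrt hx

theorem hasGradientAt_norm_sq_add_inner_sq_right (z x : E) :
    HasGradientAt (fun ξ => ‖ξ‖ ^ 2 + ⟪z, ξ⟫_ℝ ^ 2) ((2 : ℝ) • (x + ⟪z, x⟫_ℝ • z)) x := by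
  rw [hasGradientAt_iff_hasFDerivAt]
  refine ((hasStrictFDerivAt_norm_sq x).hasFDerivAt.add
    (((innerSL ℝ z).hasFDerivAt (x := x)).pow 2)).congr_fderiv ?_
  ext y
  simp only [coe_innerSL_apply, Nat.add_one_sub_one, pow_one, nsmul_eq_mul, Nat.cast_ofNat,
    add_apply, smul_apply, smul_eq_mul, smul_add,
    map_add, map_smul, toDual_apply_apply]
  ring

theorem hasGradientAt_norm_sq_add_inner_sq_left (ξ x : E) :
    HasGradientAt (fun z => ‖ξ‖ ^ 2 + ⟪z, ξ⟫_ℝ ^ 2) ((2 * ⟪x, ξ⟫_ℝ) • ξ) x := by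
  rw [hasGradientAt_iff_hasFDerivAt]
  simp_rw [real_inner_comm ξ]
  refine ((((innerSL ℝ ξ).hasFDerivAt (x := x)).pow 2).const_add (‖ξ‖ ^ 2)).congr_fderiv ?_
  ext y
  simp only [coe_innerSL_apply, Nat.add_one_sub_one, pow_one, nsmul_eq_mul, Nat.cast_ofNat,
    smul_apply, smul_eq_mul, map_smul, toDual_apply_apply]

theorem hasGradientAt_sqrt_norm_sq_add_inner_sq_right (z x : E)
    (hx : ‖x‖ ^ 2 + ⟪z, x⟫_ℝ ^ 2 ≠ 0) :
    HasGradientAt (fun ξ => √(‖ξ‖ ^ 2 + ⟪z, ξ⟫_ℝ ^ 2))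
      ((√(‖x‖ ^ 2 + ⟪z, x⟫_ℝ ^ 2))⁻¹ • (x + ⟪z, x⟫_ℝ • z)) x := by
  convert (hasGradientAt_norm_sq_add_inner_sq_right z x).sqrt hx using 1
  rw [smul_smul]
  ring_nf

theorem hasGradientAt_sqrt_norm_sq_add_inner_sq_left (ξ x : E)
    (hx : ‖ξ‖ ^ 2 + ⟪x, ξ⟫_ℝ ^ 2 ≠ 0) :
    HasGradientAt (fun z => √(‖ξ‖ ^ 2 + ⟪z, ξ⟫_ℝ ^ 2))
      ((√(‖ξ‖ ^ 2 + ⟪x, ξ⟫_ℝ ^ 2))⁻¹ • ⟪x, ξ⟫_ℝ • ξ) x := by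
  convert (hasGradientAt_norm_sq_add_inner_sq_left ξ x).sqrt hx using 1
  rw [smul_smul, smul_smul]
  ring_nf

end Gradient

section Geodesic

variable {E : Type*} [NormedAddCommGroup E] [InnerProductSpace ℝ E] {η : E} (hη : η ≠ 0) (t : ℝ)

include hη

theorem inner_sinh_div_smul_inv_cosh_smul :
    ⟪(sinh t / ‖η‖) • η, (cosh t)⁻¹ • η⟫_ℝ = sinh t / cosh t * ‖η‖ := by
  have hη' : ‖η‖ ≠ 0 := norm_ne_zero_iff.2 hη
  rw [real_inner_smul_left, real_inner_smul_right, real_inner_self_eq_norm_sq]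
  field_simp

theorem norm_sq_add_inner_sq_sinh_div_smul_inv_cosh_smul :
    ‖(cosh t)⁻¹ • η‖ ^ 2 + ⟪(sinh t / ‖η‖) • η, (cosh t)⁻¹ • η⟫_ℝ ^ 2 = ‖η‖ ^ 2 := by
  have hc : cosh t ≠ 0 := (cosh_pos t).ne'
  rw [inner_sinh_div_smul_inv_cosh_smul hη, norm_smul, norm_inv, norm_of_nonneg (cosh_pos t).le]
  field_simp
  rw [cosh_sq']

theorem sqrt_norm_sq_add_inner_sq_sinh_div_smul_inv_cosh_smul :
    √(‖(cosh t)⁻¹ • η‖ ^ 2 + ⟪(sinh t / ‖η‖) • η, (cosh t)⁻¹ • η⟫_ℝ ^ 2) = ‖η‖ := by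
  rw [norm_sq_add_inner_sq_sinh_div_smul_inv_cosh_smul hη, sqrt_sq (norm_nonneg η)]

theorem gradient_sqrt_norm_sq_add_inner_sq_right_at_geodesic [CompleteSpace E] :
    gradient (fun ξ => √(‖ξ‖ ^ 2 + ⟪(sinh t / ‖η‖) • η, ξ⟫_ℝ ^ 2)) ((cosh t)⁻¹ • η)
      = (cosh t / ‖η‖) • η := by
  have hη' : ‖η‖ ≠ 0 := norm_ne_zero_iff.2 hη
  have hc : cosh t ≠ 0 := (cosh_pos t).ne'
  have hQ := norm_sq_add_inner_sq_sinh_div_smul_inv_cosh_smul hη t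
  rw [(hasGradientAt_sqrt_norm_sq_add_inner_sq_right _ _ (by rw [hQ]; positivity)).gradient,
    sqrt_norm_sq_add_inner_sq_sinh_div_smul_inv_cosh_smul hη,
    inner_sinh_div_smul_inv_cosh_smul hη, smul_smul, ← add_smul, smul_smul]
  congr 1
  field_simp
  rw [cosh_sq']

theorem gradient_sqrt_norm_sq_add_inner_sq_left_at_geodesic [CompleteSpace E] :
    gradient (fun z => √(‖(cosh t)⁻¹ • η‖ ^ 2 + ⟪z, (cosh t)⁻¹ • η⟫_ℝ ^ 2)) ((sinh t / ‖η‖) • η)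
      = (sinh t / cosh t ^ 2) • η := by
  have hη' : ‖η‖ ≠ 0 := norm_ne_zero_iff.2 hη
  have hQ := norm_sq_add_inner_sq_sinh_div_smul_inv_cosh_smul hη t
  rw [(hasGradientAt_sqrt_norm_sq_add_inner_sq_left _ _ (by rw [hQ]; positivity)).gradient,
    sqrt_norm_sq_add_inner_sq_sinh_div_smul_inv_cosh_smul hη,
    inner_sinh_div_smul_inv_cosh_smul hη, smul_smul, smul_smul]
  congr 1
  field_simp

end Geodesic

/-- The curves `z*(t) = sinh(t) η/‖η‖`, `ξ*(t) = η/cosh(t)` satisfy Hamilton's equations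
for the Hamiltonian `h(z,ξ) = √(‖ξ‖² + ⟨z,ξ⟩²)` of the hyperbolic metric on `ℝ²`,
for all `t ∈ ℝ`, with initial conditions `z*(0) = 0`, `ξ*(0) = η`. -/
theorem stmt_7 (η : EuclideanSpace ℝ (Fin 2)) (hη : η ≠ 0) :
    let h : EuclideanSpace ℝ (Fin 2) → EuclideanSpace ℝ (Fin 2) → ℝ :=
      fun z ξ => Real.sqrt (‖ξ‖ ^ 2 + (inner ℝ z ξ : ℝ) ^ 2)
    let zs : ℝ → EuclideanSpace ℝ (Fin 2) := fun t => (Real.sinh t / ‖η‖) • η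
    let ξs : ℝ → EuclideanSpace ℝ (Fin 2) := fun t => (Real.cosh t)⁻¹ • η
    zs 0 = 0 ∧ ξs 0 = η ∧
      ∀ t : ℝ,
        HasDerivAt zs (gradient (fun ξ => h (zs t) ξ) (ξs t)) t ∧
        HasDerivAt ξs (-gradient (fun z => h z (ξs t)) (zs t)) t := by
  intro h zs ξs
  refine ⟨by simp [zs], by simp [ξs], fun t => ⟨?_, ?_⟩⟩
  · refine (((hasDerivAt_sinh t).div_const ‖η‖).smul_const η).congr_deriv ?_
    exact (gradient_sqrt_norm_sq_add_inner_sq_right_at_geodesic hη t).symm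
  · refine (((hasDerivAt_cosh t).inv (cosh_pos t).ne').smul_const η).congr_deriv ?_
    rw [gradient_sqrt_norm_sq_add_inner_sq_left_at_geodesic hη t, ← neg_smul, neg_div]
end

section
/- Let d ≥ 1, let U ⊆ ℝ^d be open, let g : U → (symmetric positive definite real d×d matrices) be smooth with inverse matrix g⁻¹(x) = (g^{μν}(x)), and define h(x,ξ) = √(Σ_{μν} g^{μν}(x) ξ_μ ξ_ν) for x ∈ U, ξ ∈ ℝ^d \ {0}. Let (x*, ξ*) : I → U × (ℝ^d \ {0}) (I ⊆ ℝ an open interval) satisfy Hamilton's equations for h. Let φ : I × U → ℂ be twice continuously differentiable and suppose that for all t ∈ I: φ(t, x*(t)) = 0 and ∂φ/∂x^α(t, x*(t)) = ξ*_α(t) for all α. Define b₂(t,x) := −(∂φ/∂t(t,x))² + Σ_{μν} g^{μν}(x) (∂φ/∂x^μ)(t,x) (∂φ/∂x^ν)(t,x). Then b₂ has a second-order zero in x along the flow: for every t ∈ I, b₂(t, x*(t)) = 0 and ∂b₂/∂x^μ(t, x*(t)) = 0 for every μ. -/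
/-!
Write `h(x, ξ) = √(g^{μν}(x) ξ_μ ξ_ν)`. Differentiating `φ(t, x*(t)) = 0` in `t` gives
`∂ₜφ = -ẋ*·ξ* = -h` along the curve (Euler's identity for the `1`-homogeneous `h`), so there
`b₂ = -h² + g^{μν} ξ*_μ ξ*_ν = 0`. Differentiating `∂_μφ(t, x*(t)) = ξ*_μ(t)` and exchanging mixed
partials gives `∂_μ∂ₜφ + ẋ*^α ∂_μ∂_αφ = ξ̇*_μ`. Since `g^{αβ} ξ*_β = h ẋ*^α`, along the curve
`∂_μ b₂ = 2h (∂_μ∂ₜφ + ẋ*^α ∂_μ∂_αφ) + ∂_μ g^{αβ} ξ*_α ξ*_β = 2h ξ̇*_μ + 2h ∂_μ h`,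
which vanishes by the second Hamilton equation.
-/

open Filter Topology Function
open scoped Matrix

section MatrixInverse

variable {𝕜 E n : Type*} [NontriviallyNormedField 𝕜] [NormedAddCommGroup E] [NormedSpace 𝕜 E]
  [Fintype n] [DecidableEq n] {M : E → Matrix n n 𝕜} {x : E}

theorem differentiableAt_det (hM : ∀ i j, DifferentiableAt 𝕜 (fun y => M y i j) x) :
    DifferentiableAt 𝕜 (fun y => (M y).det) x := by
  simp_rw [Matrix.det_apply']
  fun_prop

theorem differentiableAt_inv_apply (hM : ∀ i j, DifferentiableAt 𝕜 (fun y => M y i j) x)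
    (hdet : (M x).det ≠ 0) (i j : n) :
    DifferentiableAt 𝕜 (fun y => (M y)⁻¹ i j) x := by
  simp_rw [Matrix.inv_def, Matrix.smul_apply, Ring.inverse_eq_inv', smul_eq_mul,
    Matrix.adjugate_apply]
  refine ((differentiableAt_det hM).inv hdet).mul (differentiableAt_det fun k l => ?_)
  by_cases hk : k = j
  · subst hk
    simp only [Matrix.updateRow_self]
    fun_prop
  · simp only [Matrix.updateRow_ne hk]
    exact hM k l

end MatrixInverse

theorem ContinuousLinearMap.apply_eq_sum_single {n M : Type*} [Fintype n] [DecidableEq n]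
    [AddCommGroup M] [Module ℝ M] [TopologicalSpace M] (L : (n → ℝ) →L[ℝ] M) (v : n → ℝ) :
    L v = ∑ α, v α • L (Pi.single α 1) := by
  conv_lhs => rw [pi_eq_sum_univ' v]
  simp only [map_sum, map_smul]

theorem ContinuousLinearMap.apply_one_prodMk {n M : Type*} [Fintype n] [DecidableEq n]
    [AddCommGroup M] [Module ℝ M] [TopologicalSpace M] (L : ℝ × (n → ℝ) →L[ℝ] M) (v : n → ℝ) :
    L (1, v) = L (1, 0) + ∑ α, v α • L (0, Pi.single α 1) := by
  have hsplit : ((1 : ℝ), v) = (1, 0) + (0, v) := by simp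
  rw [hsplit, map_add]
  exact congrArg _ ((L.comp (.inr ℝ ℝ (n → ℝ))).apply_eq_sum_single v)

section Differentiation

variable {𝕜 E F : Type*} [NontriviallyNormedField 𝕜] [NormedAddCommGroup E] [NormedSpace 𝕜 E]
  [NormedAddCommGroup F] [NormedSpace 𝕜 F]

theorem ContDiffAt.eventually_differentiableAt {n : WithTop ℕ∞} {f : E → F} {p : E}
    (hf : ContDiffAt 𝕜 n f p) (hn : 1 ≤ n) : ∀ᶠ q in 𝓝 p, DifferentiableAt 𝕜 f q :=
  ((hf.of_le hn).eventually (by simp)).mono fun _ hq => hq.differentiableAt one_ne_zero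

theorem ContDiffAt.hasFDerivAt_fderiv {f : E → F} {p : E} (hf : ContDiffAt 𝕜 2 f p) :
    HasFDerivAt (fderiv 𝕜 f) (fderiv 𝕜 (fderiv 𝕜 f) p) p :=
  ((hf.fderiv_right (m := 1) (by norm_num)).differentiableAt one_ne_zero).hasFDerivAt

theorem HasFDerivAt.eq_of_comp_eventuallyEq {g : E → F} {g' : E →L[𝕜] F} {γ : 𝕜 → E} {γ' : E}
    {c : 𝕜 → F} {c' : F} {t : 𝕜} (hg : HasFDerivAt g g' (γ t)) (hγ : HasDerivAt γ γ' t)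
    (hc : HasDerivAt c c' t) (h : ∀ᶠ s in 𝓝 t, g (γ s) = c s) : g' γ' = c' :=
  ((hg.comp_hasDerivAt t hγ).congr_of_eventuallyEq (h.mono fun _ hs => hs.symm)).unique hc

end Differentiation

section PartialDerivatives

variable {E F : Type*} [NormedAddCommGroup E] [NormedSpace ℝ E] [NormedAddCommGroup F]
  [NormedSpace ℝ F] {φ : ℝ → E → F} {t : ℝ} {x : E}

theorem deriv_curry_fst (hφ : DifferentiableAt ℝ (uncurry φ) (t, x)) :
    deriv (fun s => φ s x) t = fderiv ℝ (uncurry φ) (t, x) (1, 0) := by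
  have h := hφ.hasFDerivAt.comp t (hasFDerivAt_prodMk_left (𝕜 := ℝ) t x)
  exact h.hasDerivAt.deriv

theorem fderiv_curry_snd (hφ : DifferentiableAt ℝ (uncurry φ) (t, x)) :
    fderiv ℝ (fun y => φ t y) x = (fderiv ℝ (uncurry φ) (t, x)).comp (.inr ℝ ℝ E) :=
  (hφ.hasFDerivAt.comp x (hasFDerivAt_prodMk_right t x)).fderiv

theorem hasFDerivAt_fderiv_uncurry_apply (hφ : ContDiffAt ℝ 2 (uncurry φ) (t, x)) (u : ℝ × E) :
    HasFDerivAt (fun y => fderiv ℝ (uncurry φ) (t, y) u)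
      ((ContinuousLinearMap.apply ℝ F u).comp
        ((fderiv ℝ (fderiv ℝ (uncurry φ)) (t, x)).comp (.inr ℝ ℝ E))) x :=
  (ContinuousLinearMap.apply ℝ F u).hasFDerivAt.comp x
    (hφ.hasFDerivAt_fderiv.comp x (hasFDerivAt_prodMk_right t x))

theorem eventually_differentiableAt_uncurry (hφ : ContDiffAt ℝ 2 (uncurry φ) (t, x)) :
    ∀ᶠ y in 𝓝 x, DifferentiableAt ℝ (uncurry φ) (t, y) :=
  ((Continuous.prodMk_right t).tendsto x).eventually (hφ.eventually_differentiableAt one_le_two)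

theorem hasFDerivAt_deriv_curry_fst (hφ : ContDiffAt ℝ 2 (uncurry φ) (t, x)) :
    HasFDerivAt (fun y => deriv (fun s => φ s y) t)
      ((ContinuousLinearMap.apply ℝ F (1, 0)).comp
        ((fderiv ℝ (fderiv ℝ (uncurry φ)) (t, x)).comp (.inr ℝ ℝ E))) x :=
  (hasFDerivAt_fderiv_uncurry_apply hφ (1, 0)).congr_of_eventuallyEq
    ((eventually_differentiableAt_uncurry hφ).mono fun _ hy => deriv_curry_fst hy)

theorem hasFDerivAt_fderiv_curry_snd_apply (hφ : ContDiffAt ℝ 2 (uncurry φ) (t, x)) (w : E) :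
    HasFDerivAt (fun y => fderiv ℝ (fun z => φ t z) y w)
      ((ContinuousLinearMap.apply ℝ F (0, w)).comp
        ((fderiv ℝ (fderiv ℝ (uncurry φ)) (t, x)).comp (.inr ℝ ℝ E))) x :=
  (hasFDerivAt_fderiv_uncurry_apply hφ (0, w)).congr_of_eventuallyEq
    ((eventually_differentiableAt_uncurry hφ).mono fun _ hy => by
      beta_reduce
      rw [fderiv_curry_snd hy]
      rfl)

theorem deriv_add_fderiv_curry_eq_of_eventuallyEq {γ : ℝ → E} {γ' : E} {c : ℝ → F} {c' : F}
    (hφ : DifferentiableAt ℝ (uncurry φ) (t, γ t)) (hγ : HasDerivAt γ γ' t)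
    (hc : HasDerivAt c c' t) (h : ∀ᶠ s in 𝓝 t, φ s (γ s) = c s) :
    deriv (fun s => φ s (γ t)) t + fderiv ℝ (fun y => φ t y) (γ t) γ' = c' := by
  have hcurve := hφ.hasFDerivAt.eq_of_comp_eventuallyEq ((hasDerivAt_id t).prodMk hγ) hc h
  rw [deriv_curry_fst hφ, fderiv_curry_snd hφ, ← hcurve, ContinuousLinearMap.comp_apply,
    ContinuousLinearMap.inr_apply, ← map_add, Prod.mk_add_mk, add_zero, zero_add]

/-- The chain rule gives `c' = D²φ (1, γ') (0, w)`; symmetry of `D²φ` swaps the arguments. -/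
theorem fderiv_fderiv_uncurry_apply_eq_of_eventuallyEq {γ : ℝ → E} {γ' w : E} {c : ℝ → F}
    {c' : F} (hφ : ContDiffAt ℝ 2 (uncurry φ) (t, γ t)) (hγ : HasDerivAt γ γ' t)
    (hc : HasDerivAt c c' t) (h : ∀ᶠ s in 𝓝 t, fderiv ℝ (fun y => φ s y) (γ s) w = c s) :
    fderiv ℝ (fderiv ℝ (uncurry φ)) (t, γ t) (0, w) (1, γ') = c' := by
  have hcurve : HasDerivAt (fun s => (s, γ s)) ((1 : ℝ), γ') t := (hasDerivAt_id t).prodMk hγ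
  have hD := (ContinuousLinearMap.apply ℝ F ((0 : ℝ), w)).hasFDerivAt.comp (t, γ t)
    hφ.hasFDerivAt_fderiv
  have hnear := hcurve.continuousAt.eventually (hφ.eventually_differentiableAt one_le_two)
  have hev : ∀ᶠ s in 𝓝 t, fderiv ℝ (uncurry φ) (s, γ s) (0, w) = c s := by
    filter_upwards [hnear, h] with s hs hcs
    rw [← hcs, fderiv_curry_snd hs]
    rfl
  have hchain := hD.eq_of_comp_eventuallyEq hcurve hc hev
  rwa [hφ.isSymmSndFDerivAt (by simp)]

end PartialDerivatives

section QuadraticForm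

variable {n : Type*} [Fintype n]

theorem sum_mulVec_mul (G : Matrix n n ℝ) (ξ : n → ℝ) :
    ∑ α, (G *ᵥ ξ) α * ξ α = ∑ μ, ∑ ν, G μ ν * ξ μ * ξ ν := by
  simp only [Matrix.mulVec, dotProduct, Finset.sum_mul]
  exact Finset.sum_congr rfl fun μ _ => Finset.sum_congr rfl fun ν _ => by ring

theorem Matrix.PosDef.quadForm_pos {G : Matrix n n ℝ} (hG : G.PosDef) {ξ : n → ℝ} (hξ : ξ ≠ 0) :
    0 < ∑ μ, ∑ ν, G μ ν * ξ μ * ξ ν := by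
  rw [← sum_mulVec_mul]
  simpa [dotProduct, mul_comm] using hG.dotProduct_mulVec_pos hξ

theorem sum_mulVec_div_sqrt_mul (G : Matrix n n ℝ) (ξ : n → ℝ) :
    ∑ α, (G *ᵥ ξ) α / √(∑ μ, ∑ ν, G μ ν * ξ μ * ξ ν) * ξ α
      = √(∑ μ, ∑ ν, G μ ν * ξ μ * ξ ν) := by
  simp_rw [div_mul_eq_mul_div, ← Finset.sum_div, sum_mulVec_mul]
  exact Real.div_sqrt

theorem sum_ofReal_mul_mul_add_mul {G : Matrix n n ℝ} (hG : G.IsHermitian) (ξ : n → ℝ)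
    (w : n → ℂ) :
    ∑ μ, ∑ ν, (G μ ν : ℂ) * (w μ * ξ ν + ξ μ * w ν) = 2 * ∑ μ, ((G *ᵥ ξ) μ : ℂ) * w μ := by
  have hsymm : ∀ μ ν, G μ ν = G ν μ := fun μ ν => by simpa using hG.apply ν μ
  have hswap : ∑ μ, ∑ ν, (G μ ν : ℂ) * (ξ μ * w ν) = ∑ μ, ∑ ν, (G μ ν : ℂ) * (w μ * ξ ν) := by
    rw [Finset.sum_comm]
    exact Finset.sum_congr rfl fun μ _ => Finset.sum_congr rfl fun ν _ => by rw [hsymm]; ring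
  simp only [mul_add, Finset.sum_add_distrib, hswap, ← two_mul, Matrix.mulVec, dotProduct,
    Complex.ofReal_sum, Complex.ofReal_mul, Finset.sum_mul]
  exact congrArg _ (Finset.sum_congr rfl fun μ _ => Finset.sum_congr rfl fun ν _ => by ring)

theorem fderiv_sqrt_quadForm_single [DecidableEq n] {G : Matrix n n ℝ} (hG : G.IsHermitian)
    {ξ : n → ℝ} (hQ : 0 < ∑ μ, ∑ ν, G μ ν * ξ μ * ξ ν) (α : n) :
    fderiv ℝ (fun ξ : n → ℝ => √(∑ μ, ∑ ν, G μ ν * ξ μ * ξ ν)) ξ (Pi.single α 1)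
      = (G *ᵥ ξ) α / √(∑ μ, ∑ ν, G μ ν * ξ μ * ξ ν) := by
  have hQd := HasFDerivAt.fun_sum (u := Finset.univ) fun μ _ =>
    HasFDerivAt.fun_sum (u := Finset.univ) fun ν _ =>
      ((hasFDerivAt_apply (𝕜 := ℝ) μ ξ).const_mul (G μ ν)).fun_mul
        (hasFDerivAt_apply (𝕜 := ℝ) ν ξ)
  have hsymm : ∀ μ ν, G μ ν = G ν μ := fun μ ν => by simpa using hG.apply ν μ
  rw [(hQd.sqrt hQ.ne').fderiv]
  simp only [one_div, mul_inv_rev, Finset.sum_add_distrib, smul_add, add_apply, smul_apply,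
    sum_apply, ContinuousLinearMap.proj_apply, Pi.single_apply, smul_eq_mul, mul_ite, mul_one,
    mul_zero, Finset.sum_ite_eq', Finset.mem_univ, ↓reduceIte, hsymm _ α, Finset.sum_ite_irrel,
    Finset.sum_const_zero, Matrix.mulVec, dotProduct]
  field_simp
  simp_rw [mul_comm (ξ _) (G α _)]
  ring

theorem fderiv_sqrt_quadForm_param {E : Type*} [NormedAddCommGroup E] [NormedSpace ℝ E]
    {G : E → Matrix n n ℝ} {x : E} (hG : ∀ μ ν, DifferentiableAt ℝ (fun y => G y μ ν) x)
    {ξ : n → ℝ} (hQ : 0 < ∑ μ, ∑ ν, G x μ ν * ξ μ * ξ ν) (v : E) :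
    fderiv ℝ (fun y => √(∑ μ, ∑ ν, G y μ ν * ξ μ * ξ ν)) x v
      = (∑ μ, ∑ ν, fderiv ℝ (fun y => G y μ ν) x v * ξ μ * ξ ν)
        / (2 * √(∑ μ, ∑ ν, G x μ ν * ξ μ * ξ ν)) := by
  have hQd := HasFDerivAt.fun_sum (u := Finset.univ) fun μ _ =>
    HasFDerivAt.fun_sum (u := Finset.univ) fun ν _ =>
      ((hG μ ν).hasFDerivAt.mul_const (ξ μ)).mul_const (ξ ν)
  rw [(hQd.sqrt hQ.ne').fderiv]
  simp [div_eq_mul_inv, mul_comm, mul_left_comm]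

end QuadraticForm

section WaveSymbol

variable {n : Type*} [Fintype n]

/-- Principal symbol of the wave operator: `b₂ t x = waveSymbol (g x)⁻¹ (∂ₜφ) (∂ₓφ)`, the
derivatives taken at `(t, x)`. -/
def waveSymbol (G : Matrix n n ℝ) (τ : ℂ) (ζ : n → ℂ) : ℂ :=
  -τ ^ 2 + ∑ μ, ∑ ν, (G μ ν : ℂ) * ζ μ * ζ ν

theorem waveSymbol_neg_sqrt_quadForm (G : Matrix n n ℝ) {ξ : n → ℝ}
    (hQ : 0 ≤ ∑ μ, ∑ ν, G μ ν * ξ μ * ξ ν) :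
    waveSymbol G (-(√(∑ μ, ∑ ν, G μ ν * ξ μ * ξ ν) : ℝ)) (fun μ => (ξ μ : ℂ)) = 0 := by
  have hsq := congrArg (fun r : ℝ => (r : ℂ)) (Real.sq_sqrt hQ)
  push_cast at hsq
  rw [waveSymbol, neg_sq, hsq]
  ring

theorem fderiv_waveSymbol_apply {E : Type*} [NormedAddCommGroup E] [NormedSpace ℝ E]
    {G : E → Matrix n n ℝ} {τ : E → ℂ} {ζ : n → E → ℂ} {x : E}
    (hG : ∀ μ ν, DifferentiableAt ℝ (fun y => G y μ ν) x) (hτ : DifferentiableAt ℝ τ x)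
    (hζ : ∀ μ, DifferentiableAt ℝ (ζ μ) x) (v : E) :
    fderiv ℝ (fun y => waveSymbol (G y) (τ y) (fun μ => ζ μ y)) x v
      = -(2 * τ x * fderiv ℝ τ x v)
        + ∑ μ, ∑ ν, ((fderiv ℝ (fun y => G y μ ν) x v : ℝ) : ℂ) * ζ μ x * ζ ν x
        + ∑ μ, ∑ ν, (G x μ ν : ℂ) * (fderiv ℝ (ζ μ) x v * ζ ν x + ζ μ x * fderiv ℝ (ζ ν) x v) := by
  have hGc : ∀ μ ν, HasFDerivAt (fun y => (G y μ ν : ℂ))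
      (Complex.ofRealCLM.comp (fderiv ℝ (fun y => G y μ ν) x)) x := fun μ ν =>
    Complex.ofRealCLM.hasFDerivAt.comp x (hG μ ν).hasFDerivAt
  have hsum := HasFDerivAt.fun_sum (u := Finset.univ) fun μ _ =>
    HasFDerivAt.fun_sum (u := Finset.univ) fun ν _ =>
      ((hGc μ ν).fun_mul (hζ μ).hasFDerivAt).fun_mul (hζ ν).hasFDerivAt
  unfold waveSymbol
  rw [((hτ.hasFDerivAt.pow 2).fun_neg.fun_add hsum).fderiv]
  simp only [Nat.add_one_sub_one, pow_one, nsmul_eq_mul, Nat.cast_ofNat, smul_add, add_apply,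
    neg_apply, smul_apply, smul_eq_mul, sum_apply, ContinuousLinearMap.comp_apply,
    Complex.ofRealCLM_apply]
  rw [add_assoc, ← Finset.sum_add_distrib]
  congr 1
  refine Finset.sum_congr rfl fun μ _ => ?_
  rw [← Finset.sum_add_distrib]
  exact Finset.sum_congr rfl fun ν _ => by ring

variable [DecidableEq n] {φ : ℝ → (n → ℝ) → ℂ} {t : ℝ}

theorem deriv_curry_fst_eq_neg_sqrt_quadForm {γ : ℝ → n → ℝ} {G : Matrix n n ℝ} {ξ : n → ℝ}
    (hφ : DifferentiableAt ℝ (uncurry φ) (t, γ t))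
    (hγ : HasDerivAt γ (fun α => (G *ᵥ ξ) α / √(∑ μ, ∑ ν, G μ ν * ξ μ * ξ ν)) t)
    (h0 : ∀ᶠ s in 𝓝 t, φ s (γ s) = 0)
    (hξ : ∀ α, fderiv ℝ (fun y => φ t y) (γ t) (Pi.single α 1) = ξ α) :
    deriv (fun s => φ s (γ t)) t = -(√(∑ μ, ∑ ν, G μ ν * ξ μ * ξ ν) : ℝ) := by
  have hsum := deriv_add_fderiv_curry_eq_of_eventuallyEq hφ hγ (hasDerivAt_const t 0) h0
  simp only [ContinuousLinearMap.apply_eq_sum_single, hξ, Complex.real_smul,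
    ← Complex.ofReal_mul, ← Complex.ofReal_sum, sum_mulVec_div_sqrt_mul] at hsum
  linear_combination hsum

theorem fderiv_waveSymbol_phase_apply {G : (n → ℝ) → Matrix n n ℝ} {x ξ : n → ℝ} {h : ℝ}
    (hφ : ContDiffAt ℝ 2 (uncurry φ) (t, x)) (hG : ∀ μ ν, DifferentiableAt ℝ (fun y => G y μ ν) x)
    (hGx : (G x).IsHermitian) (hh : h ≠ 0) (hτ : deriv (fun s => φ s x) t = -h)
    (hξ : ∀ α, fderiv ℝ (fun y => φ t y) x (Pi.single α 1) = ξ α) (v : n → ℝ) :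
    fderiv ℝ (fun y => waveSymbol (G y) (deriv (fun s => φ s y) t)
        (fun α => fderiv ℝ (fun z => φ t z) y (Pi.single α 1))) x v
      = 2 * h * fderiv ℝ (fderiv ℝ (uncurry φ)) (t, x) (0, v) (1, fun α => (G x *ᵥ ξ) α / h)
        + ((∑ μ, ∑ ν, fderiv ℝ (fun y => G y μ ν) x v * ξ μ * ξ ν : ℝ) : ℂ) := by
  have hτd := hasFDerivAt_deriv_curry_fst hφ
  have hζd := hasFDerivAt_fderiv_curry_snd_apply hφ
  rw [fderiv_waveSymbol_apply hG hτd.differentiableAt (fun α => (hζd _).differentiableAt),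
    hτd.fderiv]
  simp only [(hζd _).fderiv, hτ, hξ, ContinuousLinearMap.comp_apply,
    ContinuousLinearMap.apply_apply, ContinuousLinearMap.inr_apply,
    sum_ofReal_mul_mul_add_mul hGx]
  rw [ContinuousLinearMap.apply_one_prodMk _ (fun α => (G x *ᵥ ξ) α / h)]
  have hh' : (h : ℂ) ≠ 0 := by exact_mod_cast hh
  push_cast
  simp only [Complex.real_smul, Complex.ofReal_div, mul_add, Finset.mul_sum]
  field_simp
  ring

end WaveSymbol

theorem stmt_11_general (d : ℕ)
    (U : Set (Fin d → ℝ)) (hU : IsOpen U)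
    (g : (Fin d → ℝ) → Matrix (Fin d) (Fin d) ℝ)
    (hg : ∀ μ ν : Fin d, ContDiffOn ℝ (⊤ : ℕ∞) (fun x => g x μ ν) U)
    (hpd : ∀ x ∈ U, (g x).PosDef)
    (I : Set ℝ) (hI : IsOpen I)
    (xs ξs : ℝ → Fin d → ℝ)
    (hmem : ∀ t ∈ I, xs t ∈ U) (hne : ∀ t ∈ I, ξs t ≠ 0)
    (ham1 : ∀ t ∈ I, HasDerivAt xs
      (fun α => fderiv ℝ
        (fun ξ : Fin d → ℝ => Real.sqrt (∑ μ, ∑ ν, (g (xs t))⁻¹ μ ν * ξ μ * ξ ν))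
        (ξs t) (Pi.single α 1)) t)
    (ham2 : ∀ t ∈ I, HasDerivAt ξs
      (fun α => -fderiv ℝ
        (fun x : Fin d → ℝ => Real.sqrt (∑ μ, ∑ ν, (g x)⁻¹ μ ν * ξs t μ * ξs t ν))
        (xs t) (Pi.single α 1)) t)
    (φ : ℝ → (Fin d → ℝ) → ℂ)
    (hφ : ContDiffOn ℝ 2 (fun p : ℝ × (Fin d → ℝ) => φ p.1 p.2) (I ×ˢ U))
    (hφ0 : ∀ t ∈ I, φ t (xs t) = 0)
    (hφx : ∀ t ∈ I, ∀ α : Fin d,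
      fderiv ℝ (fun x => φ t x) (xs t) (Pi.single α 1) = ((ξs t α : ℝ) : ℂ)) :
    let b₂ : ℝ → (Fin d → ℝ) → ℂ := fun t x =>
      -(deriv (fun s => φ s x) t) ^ 2
        + ∑ μ, ∑ ν, (((g x)⁻¹ μ ν : ℝ) : ℂ) *
            fderiv ℝ (fun y => φ t y) x (Pi.single μ 1) *
            fderiv ℝ (fun y => φ t y) x (Pi.single ν 1)
    ∀ t ∈ I, b₂ t (xs t) = 0 ∧
      ∀ μ : Fin d, fderiv ℝ (fun x => b₂ t x) (xs t) (Pi.single μ 1) = 0 := by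
  intro b₂ t ht
  have hx : xs t ∈ U := hmem t ht
  have hG : ((g (xs t))⁻¹).PosDef := (hpd _ hx).inv
  have hQ := hG.quadForm_pos (hne t ht)
  have hGdiff : ∀ μ ν, DifferentiableAt ℝ (fun x => (g x)⁻¹ μ ν) (xs t) :=
    differentiableAt_inv_apply (fun μ ν =>
      ((hg μ ν).contDiffAt (hU.mem_nhds hx)).differentiableAt (by simp)) (hpd _ hx).det_pos.ne'
  have hvel := ham1 t ht
  simp only [fderiv_sqrt_quadForm_single hG.isHermitian hQ] at hvel
  have hforce := ham2 t ht
  simp only [fderiv_sqrt_quadForm_param hGdiff hQ] at hforce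
  have hΦ : ContDiffAt ℝ 2 (uncurry φ) (t, xs t) :=
    hφ.contDiffAt (prod_mem_nhds (hI.mem_nhds ht) (hU.mem_nhds hx))
  have hτ := deriv_curry_fst_eq_neg_sqrt_quadForm (hΦ.differentiableAt two_ne_zero) hvel
    (eventually_of_mem (hI.mem_nhds ht) hφ0) (hφx t ht)
  refine ⟨?_, fun μ => ?_⟩
  · show waveSymbol _ (deriv (fun s => φ s (xs t)) t)
      (fun μ => fderiv ℝ (fun y => φ t y) (xs t) (Pi.single μ 1)) = 0
    simp only [hτ, hφx t ht]
    exact waveSymbol_neg_sqrt_quadForm _ hQ.le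
  · have htransport := fderiv_fderiv_uncurry_apply_eq_of_eventuallyEq hΦ hvel
      (hasDerivAt_pi.1 hforce μ).ofReal_comp
      (eventually_of_mem (hI.mem_nhds ht) fun s hs => hφx s hs μ)
    show fderiv ℝ (fun x => waveSymbol _ (deriv (fun s => φ s x) t)
      (fun α => fderiv ℝ (fun y => φ t y) x (Pi.single α 1))) (xs t) (Pi.single μ 1) = 0
    have hh := (Real.sqrt_pos.2 hQ).ne'
    rw [fderiv_waveSymbol_phase_apply hΦ hGdiff hG.isHermitian hh hτ (hφx t ht), htransport]
    norm_cast
    field_simp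
    ring

/-- For a phase function `φ` of class `L_h` associated with the Hamiltonian
`h(x,ξ) = √(Σ g^{μν}(x) ξ_μ ξ_ν)`, the function
`b₂ = −(φ_t)² + Σ g^{μν} φ_{x^μ} φ_{x^ν}` has a second-order zero in `x` along the flow. -/
theorem stmt_11 (d : ℕ) (hd : 1 ≤ d)
    (U : Set (Fin d → ℝ)) (hU : IsOpen U)
    (g : (Fin d → ℝ) → Matrix (Fin d) (Fin d) ℝ)
    (hg : ∀ μ ν : Fin d, ContDiffOn ℝ (⊤ : ℕ∞) (fun x => g x μ ν) U)
    (hsym : ∀ x ∈ U, (g x).IsSymm) (hpd : ∀ x ∈ U, (g x).PosDef)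
    (I : Set ℝ) (hI : IsOpen I) (hIc : I.OrdConnected)
    (xs ξs : ℝ → Fin d → ℝ)
    (hmem : ∀ t ∈ I, xs t ∈ U) (hne : ∀ t ∈ I, ξs t ≠ 0)
    (ham1 : ∀ t ∈ I, HasDerivAt xs
      (fun α => fderiv ℝ
        (fun ξ : Fin d → ℝ => Real.sqrt (∑ μ, ∑ ν, (g (xs t))⁻¹ μ ν * ξ μ * ξ ν))
        (ξs t) (Pi.single α 1)) t)
    (ham2 : ∀ t ∈ I, HasDerivAt ξs
      (fun α => -fderiv ℝ
        (fun x : Fin d → ℝ => Real.sqrt (∑ μ, ∑ ν, (g x)⁻¹ μ ν * ξs t μ * ξs t ν))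
        (xs t) (Pi.single α 1)) t)
    (φ : ℝ → (Fin d → ℝ) → ℂ)
    (hφ : ContDiffOn ℝ 2 (fun p : ℝ × (Fin d → ℝ) => φ p.1 p.2) (I ×ˢ U))
    (hφ0 : ∀ t ∈ I, φ t (xs t) = 0)
    (hφx : ∀ t ∈ I, ∀ α : Fin d,
      fderiv ℝ (fun x => φ t x) (xs t) (Pi.single α 1) = ((ξs t α : ℝ) : ℂ)) :
    let b₂ : ℝ → (Fin d → ℝ) → ℂ := fun t x =>
      -(deriv (fun s => φ s x) t) ^ 2
        + ∑ μ, ∑ ν, (((g x)⁻¹ μ ν : ℝ) : ℂ) *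
            fderiv ℝ (fun y => φ t y) x (Pi.single μ 1) *
            fderiv ℝ (fun y => φ t y) x (Pi.single ν 1)
    ∀ t ∈ I, b₂ t (xs t) = 0 ∧
      ∀ μ : Fin d, fderiv ℝ (fun x => b₂ t x) (xs t) (Pi.single μ 1) = 0 :=
  stmt_11_general d U hU g hg hpd I hI xs ξs hmem hne ham1 ham2 φ hφ hφ0 hφx
end

section
/- Let U ⊆ ℝ^d be open, let F : U → ℂ^d be a C^∞ map whose complex Jacobian matrix J(x) (entries J(x)_{αβ} = ∂F_β/∂x^α) is invertible for every x ∈ U, let L_α f = Σ_β (J⁻¹)_{αβ} ∂f/∂x^β, and for k ≥ 0 let F_k := Σ_{|𝛂|=k} (F^𝛂/𝛂!) L_𝛂 (with F_0 = Id). Then for every multi-index 𝛃 ∈ ℕ₀^d and every k ≥ 0: if |𝛃| < k then F_k(F^𝛃) = 0 identically on U, and if |𝛃| ≥ k then F_k(F^𝛃) = binom(|𝛃|, k) · F^𝛃 identically on U, where binom denotes the binomial coefficient. -/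
/-!
Because `J⁻¹ J = 1`, the operator `L_α` acts on a pullback `g ∘ F` as `(∂g/∂z_α) ∘ F`. Hence
`L_𝛂 (F^𝛃) = ∏ᵢ βᵢ(βᵢ - 1)⋯(βᵢ - αᵢ + 1) · F^(𝛃 - 𝛂)`, so the `𝛂`-term of `F_k(F^𝛃)` is
`∏ᵢ binom(βᵢ, αᵢ) · F^𝛃`, and summing over `|𝛂| = k` gives `binom(|𝛃|, k) · F^𝛃` by the
Vandermonde identity.
-/

open Finset Set

theorem Finset.Nat.sum_antidiagonalTuple_succ {M : Type*} [AddCommMonoid M] (k n : ℕ)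
    (f : (Fin (k + 1) → ℕ) → M) :
    ∑ x ∈ Nat.antidiagonalTuple (k + 1) n, f x =
      ∑ p ∈ antidiagonal n, ∑ x ∈ Nat.antidiagonalTuple k p.2, f (Fin.cons p.1 x) := by
  rw [sum_eq_multiset_sum, sum_eq_multiset_sum]
  simp only [Nat.antidiagonalTuple, Multiset.Nat.antidiagonalTuple, List.Nat.antidiagonalTuple,
    HasAntidiagonal.antidiagonal, Multiset.Nat.antidiagonal, sum_eq_multiset_sum]
  simp [List.flatMap, List.map_flatten, List.sum_flatten, Function.comp_def]

theorem Finset.Nat.sum_antidiagonalTuple_prod_choose (d : ℕ) (b : Fin d → ℕ) (k : ℕ) :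
    ∑ m ∈ Nat.antidiagonalTuple d k, ∏ i, (b i).choose (m i) = (∑ i, b i).choose k := by
  induction d generalizing k with
  | zero => cases k <;> simp
  | succ d ih =>
    simp_rw [Nat.sum_antidiagonalTuple_succ, Fin.prod_univ_succ, Fin.cons_zero, Fin.cons_succ,
      ← mul_sum, ih, Fin.sum_univ_succ, Nat.add_choose_eq]

theorem pow_div_factorial_mul_descFactorial_mul_pow {K : Type*} [Field K] [CharZero K]
    (z : K) (b m : ℕ) :
    z ^ m / m.factorial * (b.descFactorial m * z ^ (b - m)) = b.choose m * z ^ b := by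
  rcases le_or_gt m b with hmb | hbm
  · rw [Nat.descFactorial_eq_factorial_mul_choose, ← pow_sub_mul_pow z hmb]
    have hfact : (m.factorial : K) ≠ 0 := by exact_mod_cast m.factorial_ne_zero
    push_cast
    field_simp
  · simp [Nat.descFactorial_eq_zero_iff_lt.mpr hbm, Nat.choose_eq_zero_of_lt hbm]

section Monomial

variable {ι : Type*} [Fintype ι]

def monomialFun {R : Type*} [CommSemiring R] (c : R) (b : ι → ℕ) (z : ι → R) : R :=
  c * ∏ i, z i ^ b i

theorem prod_pow_div_factorial_mul_monomialFun {K : Type*} [Field K] [CharZero K]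
    (z : ι → K) (b m : ι → ℕ) :
    (∏ i, z i ^ m i) / (∏ i, ((m i).factorial : K)) *
        monomialFun (∏ i, ((b i).descFactorial (m i) : K)) (b - m) z =
      monomialFun (∏ i, ((b i).choose (m i) : K)) b z := by
  simp only [monomialFun, ← prod_div_distrib, ← prod_mul_distrib, Pi.sub_apply,
    pow_div_factorial_mul_descFactorial_mul_pow]

variable {𝕜 : Type*} [NontriviallyNormedField 𝕜]

theorem differentiable_monomialFun (c : 𝕜) (b : ι → ℕ) :
    Differentiable 𝕜 (monomialFun c b) := by
  unfold monomialFun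
  fun_prop

-- The truncated exponent `b α - 1` is harmless: when `b α = 0` the coefficient vanishes.
theorem fderiv_monomialFun_single [DecidableEq ι] (c : 𝕜) (b : ι → ℕ) (z : ι → 𝕜) (α : ι) :
    fderiv 𝕜 (monomialFun c b) z (Pi.single α 1) =
      monomialFun (c * b α) (b - Pi.single α 1) z := by
  have hprod : HasFDerivAt (fun z : ι → 𝕜 => ∏ i, z i ^ b i)
      (∑ i, (∏ j ∈ univ.erase i, z j ^ b j) • (b i • z i ^ (b i - 1)) •
        ContinuousLinearMap.proj i) z :=
    HasFDerivAt.finsetProd fun i _ => (hasFDerivAt_apply (𝕜 := 𝕜) i z).pow (b i)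
  have hsplit : ∏ i, z i ^ (b - Pi.single α 1 : ι → ℕ) i =
      z α ^ (b α - 1) * ∏ j ∈ univ.erase α, z j ^ b j := by
    rw [← mul_prod_erase univ _ (mem_univ α)]
    congr 1
    · simp
    · refine prod_congr rfl fun j hj => ?_
      simp [ne_of_mem_erase hj]
  unfold monomialFun
  rw [(hprod.const_mul c).fderiv, hsplit]
  simp only [nsmul_eq_mul, smul_apply, _root_.sum_apply, ContinuousLinearMap.proj_apply, Pi.single_apply, smul_eq_mul, mul_ite, mul_one, mul_zero,
    sum_ite_eq', Finset.mem_univ, if_true]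
  ring

end Monomial

section LoweringOperators

variable {X ι R : Type*} [Fintype ι] [DecidableEq ι] [CommSemiring R] {U : Set X}
  {F : X → ι → R} {T : ι → (X → R) → X → R}

theorem eqOn_iterate_monomialFun
    (hT : ∀ α c b f, EqOn f (monomialFun c b ∘ F) U →
      EqOn (T α f) (monomialFun (c * b α) (b - Pi.single α 1) ∘ F) U)
    (α : ι) (n : ℕ) {c : R} {b : ι → ℕ} {f : X → R}
    (hf : EqOn f (monomialFun c b ∘ F) U) :
    EqOn ((T α)^[n] f)
      (monomialFun (c * (b α).descFactorial n) (b - Pi.single α n) ∘ F) U := by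
  induction n with
  | zero => simpa using hf
  | succ n ih =>
    rw [Function.iterate_succ_apply']
    convert hT α _ _ _ ih using 3
    · simp only [Pi.sub_apply, Pi.single_eq_same, Nat.descFactorial_succ, Nat.cast_mul]
      ring
    · rw [tsub_tsub, ← Pi.single_add]

theorem eqOn_foldr_iterate_monomialFun
    (hT : ∀ α c b f, EqOn f (monomialFun c b ∘ F) U →
      EqOn (T α f) (monomialFun (c * b α) (b - Pi.single α 1) ∘ F) U)
    (m : ι → ℕ) {l : List ι} (hl : l.Nodup) {c : R}
    {b : ι → ℕ} {f : X → R} (hf : EqOn f (monomialFun c b ∘ F) U) :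
    EqOn ((l.map fun i => (T i)^[m i]).foldr (· ∘ ·) id f)
      (monomialFun (c * ∏ i ∈ l.toFinset, ((b i).descFactorial (m i) : R))
        (b - ∑ i ∈ l.toFinset, Pi.single i (m i)) ∘ F) U := by
  induction l with
  | nil => simpa using hf
  | cons a t ih =>
    obtain ⟨hat, ht⟩ := List.nodup_cons.mp hl
    have hat' : a ∉ t.toFinset := by simpa using hat
    have hba : (b - ∑ i ∈ t.toFinset, Pi.single i (m i)) a = b a := by
      simp [Finset.sum_apply, Pi.single_apply, hat]
    rw [List.map_cons, List.foldr_cons, Function.comp_apply, List.toFinset_cons]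
    convert eqOn_iterate_monomialFun hT a (m a) (ih ht) using 3
    · rw [prod_insert hat', hba]
      ring
    · rw [sum_insert hat', add_comm, tsub_tsub]

end LoweringOperators

section JacobianFrame

variable {ι : Type*} [Fintype ι] [DecidableEq ι]

noncomputable def jacInvDeriv (J : (ι → ℝ) → Matrix ι ι ℂ) (α : ι) (f : (ι → ℝ) → ℂ)
    (x : ι → ℝ) : ℂ :=
  ∑ β, (J x)⁻¹ α β * fderiv ℝ f x (Pi.single β 1)

theorem jacInvDeriv_comp {F : (ι → ℝ) → ι → ℂ} {J : (ι → ℝ) → Matrix ι ι ℂ} {x : ι → ℝ}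
    (hF : DifferentiableAt ℝ F x)
    (hJ : ∀ α β, J x α β = fderiv ℝ (fun y => F y β) x (Pi.single α 1))
    (hinv : IsUnit (J x).det) {g : (ι → ℂ) → ℂ} (hg : DifferentiableAt ℂ g (F x)) (α : ι) :
    jacInvDeriv J α (g ∘ F) x = fderiv ℂ g (F x) (Pi.single α 1) := by
  have hcol : ∀ β, fderiv ℝ F x (Pi.single β 1) = fun γ => J x β γ := by
    intro β
    ext γ
    rw [hJ, (hasFDerivAt_pi'.mp hF.hasFDerivAt γ).fderiv]
    rfl
  have hrow : ∑ β, (J x)⁻¹ α β • (fun γ => J x β γ) = (Pi.single α 1 : ι → ℂ) := by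
    ext γ
    rw [Finset.sum_apply]
    simp only [Pi.smul_apply, smul_eq_mul, ← Matrix.mul_apply, Matrix.nonsing_inv_mul _ hinv,
      Matrix.one_apply, Pi.single_apply, eq_comm]
  rw [jacInvDeriv, ((hg.hasFDerivAt.restrictScalars ℝ).comp x hF.hasFDerivAt).fderiv, ← hrow]
  simp only [ContinuousLinearMap.comp_apply, hcol, ContinuousLinearMap.coe_restrictScalars',
    map_sum, map_smul, smul_eq_mul]

theorem eqOn_jacInvDeriv_monomialFun {U : Set (ι → ℝ)} (hU : IsOpen U) {F : (ι → ℝ) → ι → ℂ}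
    (hF : DifferentiableOn ℝ F U) {J : (ι → ℝ) → Matrix ι ι ℂ}
    (hJ : ∀ x, ∀ α β, J x α β = fderiv ℝ (fun y => F y β) x (Pi.single α 1))
    (hinv : ∀ x ∈ U, IsUnit (J x).det) (α : ι) (c : ℂ) (b : ι → ℕ) {f : (ι → ℝ) → ℂ}
    (hf : EqOn f (monomialFun c b ∘ F) U) :
    EqOn (jacInvDeriv J α f) (monomialFun (c * b α) (b - Pi.single α 1) ∘ F) U := by
  intro x hx
  have hfx : fderiv ℝ f x = fderiv ℝ (monomialFun c b ∘ F) x :=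
    (Filter.eventuallyEq_of_mem (hU.mem_nhds hx) hf).fderiv_eq
  rw [jacInvDeriv, hfx, ← jacInvDeriv, jacInvDeriv_comp (hF.differentiableAt (hU.mem_nhds hx))
    (hJ x) (hinv x hx) ((differentiable_monomialFun c b).differentiableAt)]
  exact fderiv_monomialFun_single c b (F x) α

end JacobianFrame

theorem stmt_15_general (d : ℕ)
    (U : Set (Fin d → ℝ)) (hU : IsOpen U)
    (F : (Fin d → ℝ) → Fin d → ℂ)
    (hF : ContDiffOn ℝ (⊤ : ℕ∞) (fun x => F x) U)
    (J : (Fin d → ℝ) → Matrix (Fin d) (Fin d) ℂ)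
    (hJ : ∀ x : Fin d → ℝ, ∀ α β : Fin d,
      J x α β = fderiv ℝ (fun y => F y β) x (Pi.single α 1))
    (hinv : ∀ x ∈ U, IsUnit (J x).det) :
    let L : Fin d → ((Fin d → ℝ) → ℂ) → (Fin d → ℝ) → ℂ := fun α f x =>
      ∑ β, (J x)⁻¹ α β * fderiv ℝ f x (Pi.single β 1)
    let Lm : (Fin d → ℕ) → ((Fin d → ℝ) → ℂ) → (Fin d → ℝ) → ℂ := fun m =>
      (List.ofFn fun i : Fin d => (L i)^[m i]).foldr (· ∘ ·) id
    let Fop : ℕ → ((Fin d → ℝ) → ℂ) → (Fin d → ℝ) → ℂ := fun k f x =>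
      ∑ m ∈ Finset.Nat.antidiagonalTuple d k,
        ((∏ i, F x i ^ m i) / (∏ i, ((m i).factorial : ℂ))) * Lm m f x
    ∀ b : Fin d → ℕ, ∀ k : ℕ, ∀ x ∈ U,
      ((∑ i, b i) < k → Fop k (fun y => ∏ i, F y i ^ b i) x = 0) ∧
      (k ≤ ∑ i, b i →
        Fop k (fun y => ∏ i, F y i ^ b i) x
          = ((Nat.choose (∑ i, b i) k : ℕ) : ℂ) * ∏ i, F x i ^ b i) := by
  intro L Lm Fop b k x hx
  have hmono : EqOn (fun y => ∏ i, F y i ^ b i) (monomialFun 1 b ∘ F) U := fun y _ => by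
    simp [monomialFun]
  have hLm : ∀ m, Lm m (fun y => ∏ i, F y i ^ b i) x =
      monomialFun (∏ i, ((b i).descFactorial (m i) : ℂ)) (b - m) (F x) := by
    intro m
    have h := eqOn_foldr_iterate_monomialFun
      (eqOn_jacInvDeriv_monomialFun hU (hF.differentiableOn (by simp)) hJ hinv) m
      (List.nodup_finRange d) hmono hx
    rw [List.toFinset_finRange, univ_sum_single, one_mul] at h
    simp only [Lm, List.ofFn_eq_map]
    exact h
  have key : Fop k (fun y => ∏ i, F y i ^ b i) x =
      ((∑ i, b i).choose k : ℂ) * ∏ i, F x i ^ b i := by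
    simp only [Fop, hLm, prod_pow_div_factorial_mul_monomialFun]
    simp only [monomialFun, ← sum_mul, ← Nat.cast_prod, ← Nat.cast_sum,
      Nat.sum_antidiagonalTuple_prod_choose]
  refine ⟨fun hlt => ?_, fun _ => key⟩
  rw [key, Nat.choose_eq_zero_of_lt hlt, Nat.cast_zero, zero_mul]

/-- Generalised Euler identity: the monomials `F^𝛃` are eigenfunctions of the operators
`F_k`, namely `F_k(F^𝛃) = 0` if `|𝛃| < k` and `F_k(F^𝛃) = binom(|𝛃|,k) F^𝛃` if `|𝛃| ≥ k`. -/
theorem stmt_15 (d : ℕ) (hd : 1 ≤ d)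
    (U : Set (Fin d → ℝ)) (hU : IsOpen U)
    (F : (Fin d → ℝ) → Fin d → ℂ)
    (hF : ContDiffOn ℝ (⊤ : ℕ∞) (fun x => F x) U)
    (J : (Fin d → ℝ) → Matrix (Fin d) (Fin d) ℂ)
    (hJ : ∀ x : Fin d → ℝ, ∀ α β : Fin d,
      J x α β = fderiv ℝ (fun y => F y β) x (Pi.single α 1))
    (hinv : ∀ x ∈ U, IsUnit (J x).det) :
    let L : Fin d → ((Fin d → ℝ) → ℂ) → (Fin d → ℝ) → ℂ := fun α f x =>
      ∑ β, (J x)⁻¹ α β * fderiv ℝ f x (Pi.single β 1)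
    let Lm : (Fin d → ℕ) → ((Fin d → ℝ) → ℂ) → (Fin d → ℝ) → ℂ := fun m =>
      (List.ofFn fun i : Fin d => (L i)^[m i]).foldr (· ∘ ·) id
    let Fop : ℕ → ((Fin d → ℝ) → ℂ) → (Fin d → ℝ) → ℂ := fun k f x =>
      ∑ m ∈ Finset.Nat.antidiagonalTuple d k,
        ((∏ i, F x i ^ m i) / (∏ i, ((m i).factorial : ℂ))) * Lm m f x
    ∀ b : Fin d → ℕ, ∀ k : ℕ, ∀ x ∈ U,
      ((∑ i, b i) < k → Fop k (fun y => ∏ i, F y i ^ b i) x = 0) ∧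
      (k ≤ ∑ i, b i →
        Fop k (fun y => ∏ i, F y i ^ b i) x
          = ((Nat.choose (∑ i, b i) k : ℕ) : ℂ) * ∏ i, F x i ^ b i) :=
  stmt_15_general d U hU F hF J hJ hinv
end
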